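/- Let G(N,M;α,β,K) = ∑_{j∈ℤ} (−1)^j q^{(K/2) j ((α+β)j + α − β)} [M+N choose N−Kj]_q. Suppose F(L) = ∑_{j∈ℤ} α_j(q) [2L choose L−j]_q where each coefficient series satisfies: F(k) has nonnegative coefficients for all k ≥ 0. Then ∑_{j∈ℤ} α_j(q) q^{2j^2} [2L choose L−2j]_q has nonnegative coefficients for all L ≥ 0. -/

import Mathlib

open LaurentPolynomial Finset

noncomputable section

/-- The Gaussian binomial coefficient `[m choose n]_q` as a polynomial in `q`,
defined via the `q`-Pascal recurrence; it equals `(q;q)_m/((q;q)_n (q;q)_{m-n})`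
for `0 ≤ n ≤ m`. -/
def gb : ℕ → ℕ → Polynomial ℤ
  | _, 0 => 1
  | 0, _ + 1 => 0
  | m + 1, n + 1 => gb m n + Polynomial.X ^ (n + 1) * gb m (n + 1)

/-- `[m choose n]_q` with integer indices, zero unless `0 ≤ n ≤ m`,
viewed as a Laurent polynomial in `q`. -/
def qbin (m n : ℤ) : LaurentPolynomial ℤ :=
  if 0 ≤ n ∧ n ≤ m then (gb m.toNat n.toNat).toLaurent else 0

/-- A Laurent polynomial is a polynomial in `q` with nonnegative coefficients. -/
def IsNonneg (x : LaurentPolynomial ℤ) : Prop :=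
  ∃ P : Polynomial ℤ, (∀ n, 0 ≤ P.coeff n) ∧ P.toLaurent = x

/-- The triangular number `T(j) = j(j+1)/2`. -/
def tri (j : ℤ) : ℤ := j * (j + 1) / 2

/-!
Warnaar's identity `∑_{k=0}^{L} W_{L,k} [2k, k-a]_q = q^{2a²} [2L, L-2a]_q` has coefficients
`W_{L,k}` that do not depend on `a` and are visibly polynomials with nonnegative coefficients.
Multiplying it by `α_a` and summing over `a` turns the target sum into `∑_k W_{L,k} F(k)`.

Both sides of the identity expand to the same double sum of `q`-multinomial coefficients
`[L; m, k+a, k-a, L-m-2k]_q`: the left side by `q`-trinomial revision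
`[n,k][k,s] = [n,s][n-s,k-s]`, the right side by two `q`-Vandermonde convolutions.
-/

open Polynomial in
def nonnegPoly : Subsemiring ℤ[X] where
  carrier := {P | ∀ n, 0 ≤ P.coeff n}
  mul_mem' {P Q} hP hQ n := by
    rw [coeff_mul]
    exact sum_nonneg fun ij _ => mul_nonneg (hP ij.1) (hQ ij.2)
  one_mem' n := by
    rw [coeff_one]
    split_ifs <;> simp
  add_mem' {P Q} hP hQ n := by
    rw [coeff_add]
    exact add_nonneg (hP n) (hQ n)
  zero_mem' n := by simp

def nonnegLaurent : Subsemiring (LaurentPolynomial ℤ) := nonnegPoly.map Polynomial.toLaurent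

lemma mem_nonnegLaurent {x : LaurentPolynomial ℤ} : x ∈ nonnegLaurent ↔ IsNonneg x :=
  Subsemiring.mem_map

lemma toLaurent_mem_nonnegLaurent {P : Polynomial ℤ} (hP : P ∈ nonnegPoly) :
    P.toLaurent ∈ nonnegLaurent :=
  ⟨P, hP, rfl⟩

lemma X_mem_nonnegPoly : Polynomial.X ∈ nonnegPoly := fun n => by
  rw [Polynomial.coeff_X]
  split_ifs <;> simp

lemma T_mem_nonnegLaurent {n : ℤ} (hn : 0 ≤ n) : T n ∈ nonnegLaurent := by
  lift n to ℕ using hn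
  rw [← Polynomial.toLaurent_X_pow]
  exact toLaurent_mem_nonnegLaurent (pow_mem X_mem_nonnegPoly n)

section GaussianBinomial

open Polynomial

lemma gb_zero_right (m : ℕ) : gb m 0 = 1 := by cases m <;> rfl

lemma gb_eq_zero_of_lt : ∀ {m n : ℕ}, m < n → gb m n = 0
  | 0, _ + 1, _ => rfl
  | _ + 1, _ + 1, h => by
    rw [gb, gb_eq_zero_of_lt (by omega), gb_eq_zero_of_lt (by omega), mul_zero, add_zero]

lemma gb_self : ∀ m : ℕ, gb m m = 1
  | 0 => rfl
  | m + 1 => by rw [gb, gb_self m, gb_eq_zero_of_lt m.lt_succ_self, mul_zero, add_zero]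

lemma gb_mem_nonnegPoly : ∀ m n : ℕ, gb m n ∈ nonnegPoly
  | m, 0 => gb_zero_right m ▸ one_mem _
  | 0, _ + 1 => zero_mem _
  | m + 1, n + 1 =>
    add_mem (gb_mem_nonnegPoly m n) (mul_mem (pow_mem X_mem_nonnegPoly _) (gb_mem_nonnegPoly m _))

def qint (n : ℕ) : ℤ[X] := ∑ i ∈ range n, X ^ i

lemma qint_add (a b : ℕ) : qint (a + b) = qint a + X ^ a * qint b := by
  simp only [qint, sum_range_add, pow_add, mul_sum]

def qfact : ℕ → ℤ[X]
  | 0 => 1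
  | n + 1 => qfact n * qint (n + 1)

lemma qfact_succ (n : ℕ) : qfact (n + 1) = qfact n * qint (n + 1) := rfl

lemma qfact_ne_zero : ∀ n : ℕ, qfact n ≠ 0
  | 0 => one_ne_zero
  | n + 1 => mul_ne_zero (qfact_ne_zero n) (monic_geom_sum_X n.succ_ne_zero).ne_zero

lemma gb_add_mul_qfact : ∀ a b : ℕ, gb (a + b) a * (qfact a * qfact b) = qfact (a + b)
  | 0, b => by simp [gb_zero_right, qfact]
  | a + 1, 0 => by simp [gb_self, qfact]
  | a + 1, b + 1 => by
    have h₁ := gb_add_mul_qfact a (b + 1)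
    have h₂ := gb_add_mul_qfact (a + 1) b
    have hq := qint_add (a + 1) (b + 1)
    rw [show a + 1 + b = a + (b + 1) by ring] at h₂
    rw [show a + 1 + (b + 1) = a + (b + 1) + 1 by ring] at hq ⊢
    rw [gb, qfact_succ (a + (b + 1))]
    simp only [qfact_succ a, qfact_succ b] at h₁ h₂ ⊢
    linear_combination qint (a + 1) * h₁ + X ^ (a + 1) * qint (b + 1) * h₂
      - qfact (a + (b + 1)) * hq

lemma gb_add_symm (a b : ℕ) : gb (a + b) a = gb (a + b) b := by
  refine mul_right_cancel₀ (mul_ne_zero (qfact_ne_zero a) (qfact_ne_zero b)) ?_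
  rw [gb_add_mul_qfact, mul_comm (qfact a), add_comm, gb_add_mul_qfact]

lemma gb_mul_gb (a b c : ℕ) :
    gb (a + b + c) (a + b) * gb (a + b) a = gb (a + b + c) a * gb (b + c) b := by
  refine mul_right_cancel₀
    (mul_ne_zero (mul_ne_zero (qfact_ne_zero a) (qfact_ne_zero b)) (qfact_ne_zero c)) ?_
  have h₁ := gb_add_mul_qfact a b
  have h₂ := gb_add_mul_qfact (a + b) c
  have h₃ := gb_add_mul_qfact b c
  have h₄ := gb_add_mul_qfact a (b + c)
  rw [← add_assoc] at h₄
  linear_combination gb (a + b + c) (a + b) * qfact c * h₁ + h₂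
    - gb (a + b + c) a * qfact a * h₃ - h₄

end GaussianBinomial

section QBinomial

lemma qbin_eq_zero {m n : ℤ} (h : ¬(0 ≤ n ∧ n ≤ m)) : qbin m n = 0 := if_neg h

lemma nonneg_and_le_of_qbin_ne_zero {m n : ℤ} (h : qbin m n ≠ 0) : 0 ≤ n ∧ n ≤ m :=
  not_imp_comm.1 qbin_eq_zero h

lemma qbin_natCast (m n : ℕ) : qbin m n = (gb m n).toLaurent := by
  rw [qbin]
  split_ifs with h
  · simp
  · rw [gb_eq_zero_of_lt (by omega), map_zero]

lemma qbin_zero_right (m : ℕ) : qbin m 0 = 1 := by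
  rw [← Nat.cast_zero, qbin_natCast, gb_zero_right, map_one]

lemma qbin_mem_nonnegLaurent (m n : ℤ) : qbin m n ∈ nonnegLaurent := by
  rw [qbin]
  split_ifs
  · exact toLaurent_mem_nonnegLaurent (gb_mem_nonnegPoly _ _)
  · exact zero_mem _

lemma hasFiniteSupport_qbin (m : ℤ) : (qbin m).HasFiniteSupport :=
  (Set.finite_Icc 0 m).subset fun _ hj => nonneg_and_le_of_qbin_ne_zero hj

lemma hasFiniteSupport_qbin_sub (m c : ℤ) : (fun j => qbin m (c - j)).HasFiniteSupport :=
  (hasFiniteSupport_qbin m).comp_of_injective (sub_right_injective (b := c))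

lemma qbin_succ (m : ℕ) (n : ℤ) : qbin (m + 1) n = qbin m (n - 1) + T n * qbin m n := by
  rcases lt_or_ge n 0 with hn | hn
  · rw [qbin_eq_zero (n := n) (by omega), qbin_eq_zero (n := n - 1) (by omega),
      qbin_eq_zero (n := n) (by omega), mul_zero, add_zero]
  have hm : (m : ℤ) + 1 = ((m + 1 : ℕ) : ℤ) := by push_cast; rfl
  lift n to ℕ using hn
  cases n with
  | zero =>
    rw [Nat.cast_zero, zero_sub, qbin_eq_zero (n := -1) (by omega), T_zero, hm, qbin_zero_right,
      qbin_zero_right, zero_add, one_mul]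
  | succ k =>
    rw [hm, show ((k + 1 : ℕ) : ℤ) - 1 = k by push_cast; ring, qbin_natCast, qbin_natCast,
      qbin_natCast, gb, map_add, map_mul, Polynomial.toLaurent_X_pow]

lemma qbin_symm (m n : ℤ) : qbin m (m - n) = qbin m n := by
  by_cases h : 0 ≤ n ∧ n ≤ m
  · obtain ⟨a, rfl⟩ : ∃ a : ℕ, n = a := ⟨n.toNat, by omega⟩
    obtain ⟨b, rfl⟩ : ∃ b : ℕ, m = ((a + b : ℕ) : ℤ) := ⟨(m - a).toNat, by omega⟩
    rw [show ((a + b : ℕ) : ℤ) - a = (b : ℤ) by push_cast; ring, qbin_natCast, qbin_natCast,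
      gb_add_symm]
  · rw [qbin_eq_zero h, qbin_eq_zero (by omega)]

lemma qbin_mul (n k s : ℤ) : qbin n k * qbin k s = qbin n s * qbin (n - s) (k - s) := by
  by_cases h : 0 ≤ s ∧ s ≤ k ∧ k ≤ n
  · obtain ⟨a, rfl⟩ : ∃ a : ℕ, s = a := ⟨s.toNat, by omega⟩
    obtain ⟨b, rfl⟩ : ∃ b : ℕ, k = ((a + b : ℕ) : ℤ) := ⟨(k - a).toNat, by omega⟩
    obtain ⟨c, rfl⟩ : ∃ c : ℕ, n = ((a + b + c : ℕ) : ℤ) := ⟨(n - a - b).toNat, by omega⟩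
    rw [show ((a + b + c : ℕ) : ℤ) - a = ((b + c : ℕ) : ℤ) by push_cast; ring,
      show ((a + b : ℕ) : ℤ) - a = (b : ℤ) by push_cast; ring]
    simp only [qbin_natCast, ← map_mul, gb_mul_gb]
  · obtain hs | hsk | hkn : s < 0 ∨ k < s ∨ n < k := by omega
    · rw [qbin_eq_zero (m := k) (n := s) (by omega), qbin_eq_zero (m := n) (n := s) (by omega),
        mul_zero, zero_mul]
    · rw [qbin_eq_zero (m := k) (n := s) (by omega),
        qbin_eq_zero (m := n - s) (n := k - s) (by omega), mul_zero, mul_zero]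
    · rw [qbin_eq_zero (m := n) (n := k) (by omega),
        qbin_eq_zero (m := n - s) (n := k - s) (by omega), zero_mul, mul_zero]

theorem qbin_vandermonde (m n : ℕ) (c : ℤ) :
    qbin (m + n) c = ∑ᶠ j : ℤ, T ((m - j) * (c - j)) * qbin m j * qbin n (c - j) := by
  induction m generalizing c with
  | zero =>
    rw [finsum_eq_single _ 0 fun j hj => by rw [qbin_eq_zero (by omega), mul_zero, zero_mul]]
    have h₀ : qbin 0 0 = 1 := by simpa using qbin_zero_right 0
    simp [h₀]
  | succ m ih =>
    have hsupp (f : ℤ → LaurentPolynomial ℤ) : (fun j => f j * qbin n (c - j)).HasFiniteSupport :=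
      (hasFiniteSupport_qbin_sub n c).fun_mul_right f
    calc qbin ((m + 1 : ℕ) + n) c = qbin (m + n) (c - 1) + T c * qbin (m + n) c := by
          rw [show ((m + 1 : ℕ) : ℤ) + n = ((m + n : ℕ) : ℤ) + 1 by push_cast; ring, qbin_succ]
          push_cast; rfl
      _ = ∑ᶠ j : ℤ, T ((m - j) * (c - 1 - j)) * qbin m j * qbin n (c - 1 - j)
          + ∑ᶠ j : ℤ, T c * (T ((m - j) * (c - j)) * qbin m j * qbin n (c - j)) := by
          rw [ih, ih, mul_finsum]
      _ = ∑ᶠ j : ℤ, T ((m + 1 - j) * (c - j)) * qbin m (j - 1) * qbin n (c - j)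
          + ∑ᶠ j : ℤ, T ((m + 1 - j) * (c - j)) * T j * qbin m j * qbin n (c - j) := by
          congr 1
          · conv_rhs => rw [← finsum_comp_equiv (Equiv.addRight 1)]
            refine finsum_congr fun j => ?_
            simp only [Equiv.coe_addRight, add_sub_cancel_right]
            ring_nf
          · refine finsum_congr fun j => ?_
            simp only [← mul_assoc, ← T_add]
            ring_nf
      _ = ∑ᶠ j : ℤ, T (((m + 1 : ℕ) - j) * (c - j)) * qbin (m + 1 : ℕ) j * qbin n (c - j) := by
          rw [← finsum_add_distrib (hsupp _) (hsupp _)]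
          refine finsum_congr fun j => ?_
          rw [Nat.cast_succ, qbin_succ]
          ring

lemma qbin_mul_vandermonde (L : ℕ) (t c : ℤ) :
    qbin L t * ∑ᶠ j : ℤ, T ((t - j) * (c - j)) * qbin t j * qbin (L - t) (c - j) =
      qbin L t * qbin L c := by
  by_cases ht : 0 ≤ t ∧ t ≤ L
  · obtain ⟨a, rfl⟩ : ∃ a : ℕ, t = a := ⟨t.toNat, by omega⟩
    obtain ⟨b, rfl⟩ : ∃ b : ℕ, L = a + b := ⟨L - a, by omega⟩
    rw [Nat.cast_add, add_sub_cancel_left, ← qbin_vandermonde]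
  · rw [qbin_eq_zero ht, zero_mul, zero_mul]

lemma qbin_two_mul_sub_two_mul (L : ℕ) (a : ℤ) :
    T (2 * a ^ 2) * qbin (2 * L) (L - 2 * a) =
      ∑ᶠ t : ℤ, T (2 * a ^ 2 + t * (t - 2 * a)) * (qbin L t * qbin L (t - 2 * a)) := by
  rw [two_mul (L : ℤ), qbin_vandermonde, mul_finsum, ← finsum_comp_equiv (Equiv.subLeft (L : ℤ))]
  refine finsum_congr fun t => ?_
  rw [Equiv.subLeft_apply, qbin_symm, sub_sub_cancel, show (L : ℤ) - 2 * a - (L - t) = t - 2 * a by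
    ring, T_add]
  ring

end QBinomial

lemma finsum_eq_sum_range {M : Type*} [AddCommMonoid M] (N : ℕ) {f : ℤ → M}
    (hf : ∀ j, f j ≠ 0 → 0 ≤ j ∧ j ≤ N) : ∑ᶠ j, f j = ∑ i ∈ range (N + 1), f i := by
  rw [finsum_eq_sum_of_support_subset f (s := (range (N + 1)).map Nat.castEmbedding), sum_map]
  · rfl
  · intro j hj
    obtain ⟨h₀, hN⟩ := hf j hj
    simp only [coe_map, coe_range, Set.mem_image, Set.mem_Iio, Nat.castEmbedding_apply]
    exact ⟨j.toNat, by omega, by omega⟩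

def warnaarW (L k : ℕ) : LaurentPolynomial ℤ :=
  ∑ m ∈ range (L + 1), T (k ^ 2 + (m + k) ^ 2) * qbin L m * qbin (L - m) (2 * k)

lemma warnaarW_mem_nonnegLaurent (L k : ℕ) : warnaarW L k ∈ nonnegLaurent :=
  sum_mem fun _ _ => mul_mem (mul_mem (T_mem_nonnegLaurent (by positivity))
    (qbin_mem_nonnegLaurent _ _)) (qbin_mem_nonnegLaurent _ _)

namespace Warnaar

def lhsTerm (L : ℕ) (a m k : ℤ) : LaurentPolynomial ℤ :=
  T (k ^ 2 + (m + k) ^ 2) * (qbin L m * qbin (L - m) (2 * k) * qbin (2 * k) (k - a))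

def rhsTerm (L : ℕ) (a t m : ℤ) : LaurentPolynomial ℤ :=
  T (2 * a ^ 2 + t * (t - 2 * a) + (t - m) * (t - 2 * a - m)) *
    (qbin L t * qbin t m * qbin (L - t) (t - 2 * a - m))

lemma lhsTerm_eq_rhsTerm (L : ℕ) (a m k : ℤ) : lhsTerm L a m k = rhsTerm L a (k + m + a) m := by
  have h₁ := qbin_mul (L - m) (2 * k) (k + a)
  have h₂ := qbin_mul L (k + m + a) m
  have h₃ : qbin (2 * k) (k - a) = qbin (2 * k) (k + a) := by
    rw [← qbin_symm (2 * k) (k + a), show 2 * k - (k + a) = k - a by ring]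
  rw [lhsTerm, rhsTerm, mul_assoc (qbin L m), h₃, h₁, h₂,
    show k + m + a - m = k + a by ring, show L - m - (k + a) = (L : ℤ) - (k + m + a) by ring,
    show 2 * k - (k + a) = k + m + a - 2 * a - m by ring]
  ring_nf

lemma sum_range_lhsTerm (L : ℕ) (a m : ℤ) :
    ∑ k ∈ range (L + 1), lhsTerm L a m k = ∑ᶠ t, rhsTerm L a t m := by
  rw [← finsum_eq_sum_range L fun k hk => ?_,
    ← finsum_comp_equiv (Equiv.addRight (m + a)) (f := fun t => rhsTerm L a t m)]
  · refine finsum_congr fun k => ?_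
    rw [lhsTerm_eq_rhsTerm, Equiv.coe_addRight, add_assoc]
  · simp only [lhsTerm, mul_ne_zero_iff] at hk
    have := nonneg_and_le_of_qbin_ne_zero hk.2.1.1
    have := nonneg_and_le_of_qbin_ne_zero hk.2.1.2
    omega

lemma hasFiniteSupport_rhsTerm (L : ℕ) (a m : ℤ) : (fun t => rhsTerm L a t m).HasFiniteSupport :=
  Set.Finite.subset (hasFiniteSupport_qbin L) fun t ht => by
    simp only [Function.mem_support, rhsTerm, mul_ne_zero_iff] at ht
    exact ht.2.1.1

lemma sum_range_rhsTerm (L : ℕ) (a t : ℤ) :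
    ∑ m ∈ range (L + 1), rhsTerm L a t m =
      T (2 * a ^ 2 + t * (t - 2 * a)) * (qbin L t * qbin L (t - 2 * a)) := by
  rw [← finsum_eq_sum_range L fun m hm => ?_, ← qbin_mul_vandermonde, mul_finsum, mul_finsum]
  · refine finsum_congr fun m => ?_
    rw [rhsTerm, T_add]
    ring
  · simp only [rhsTerm, mul_ne_zero_iff] at hm
    have := nonneg_and_le_of_qbin_ne_zero hm.2.1.1
    have := nonneg_and_le_of_qbin_ne_zero hm.2.1.2
    omega

end Warnaar

open Warnaar in
theorem warnaar_identity (L : ℕ) (a : ℤ) :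
    ∑ k ∈ range (L + 1), warnaarW L k * qbin (2 * k) (k - a) =
      T (2 * a ^ 2) * qbin (2 * L) (L - 2 * a) := by
  calc _ = ∑ m ∈ range (L + 1), ∑ k ∈ range (L + 1), lhsTerm L a m k := by
        rw [sum_comm]
        refine sum_congr rfl fun k _ => ?_
        rw [warnaarW, sum_mul]
        exact sum_congr rfl fun m _ => by rw [lhsTerm]; ring
    _ = ∑ m ∈ range (L + 1), ∑ᶠ t, rhsTerm L a t m :=
        sum_congr rfl fun m _ => sum_range_lhsTerm L a m
    _ = ∑ᶠ t, ∑ m ∈ range (L + 1), rhsTerm L a t m :=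
        (finsum_sum_comm _ (fun t (m : ℕ) => rhsTerm L a t m) fun m _ =>
          hasFiniteSupport_rhsTerm L a m).symm
    _ = ∑ᶠ t, T (2 * a ^ 2 + t * (t - 2 * a)) * (qbin L t * qbin L (t - 2 * a)) :=
        finsum_congr fun t => sum_range_rhsTerm L a t
    _ = _ := (qbin_two_mul_sub_two_mul L a).symm

theorem warnaar_positivity_preserving_general (α : ℤ → LaurentPolynomial ℤ)
    (hF : ∀ k : ℕ, IsNonneg (∑ᶠ j : ℤ, α j * qbin (2 * k) ((k : ℤ) - j))) :
    ∀ L : ℕ, IsNonneg (∑ᶠ j : ℤ, α j * T (2 * j ^ 2) * qbin (2 * L) ((L : ℤ) - 2 * j)) := by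
  intro L
  have hsum : ∑ᶠ j : ℤ, α j * T (2 * j ^ 2) * qbin (2 * L) ((L : ℤ) - 2 * j) =
      ∑ k ∈ range (L + 1), warnaarW L k * ∑ᶠ j : ℤ, α j * qbin (2 * k) ((k : ℤ) - j) := by
    calc _ = ∑ᶠ j : ℤ, ∑ k ∈ range (L + 1), warnaarW L k * (α j * qbin (2 * k) ((k : ℤ) - j)) :=
          finsum_congr fun j => by
            rw [mul_assoc, ← warnaar_identity, mul_sum]
            exact sum_congr rfl fun k _ => by ring
      _ = _ := by
          rw [finsum_sum_comm _ _ fun k _ =>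
            ((hasFiniteSupport_qbin_sub _ _).fun_mul_right α).fun_mul_right _]
          simp_rw [mul_finsum]
  simp only [← mem_nonnegLaurent] at hF ⊢
  rw [hsum]
  exact sum_mem fun k _ => mul_mem (warnaarW_mem_nonnegLaurent L k) (hF k)

/-- Warnaar's transformation is positivity-preserving: if every
`F(k) = ∑_{j ∈ ℤ} α_j(q) [2k choose k-j]_q` (`k ≥ 0`) has nonnegative
coefficients, then so does `∑_{j ∈ ℤ} α_j(q) q^{2j²} [2L choose L-2j]_q`
for every `L ≥ 0`. -/
theorem warnaar_positivity_preserving (α : ℤ → LaurentPolynomial ℤ)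
    (hfin : (Function.support α).Finite)
    (hF : ∀ k : ℕ, IsNonneg (∑ᶠ j : ℤ, α j * qbin (2 * k) ((k : ℤ) - j))) :
    ∀ L : ℕ, IsNonneg (∑ᶠ j : ℤ, α j * T (2 * j ^ 2) * qbin (2 * L) ((L : ℤ) - 2 * j)) :=
  warnaar_positivity_preserving_general α hF
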